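/- arXiv:cs/0607055 — 2 statements merged into one kernel-verified Lean document; each statement's English description precedes it below -/
import Mathlib

section
/- Let G be a connected chordal graph, and let S be an inclusion-minimal element of the set of minimal vertex separators of G. Let Γ_m be a connected component of G(V \ S) such that the induced subgraph G(Γ_m ∪ S) is not complete. Then every minimal vertex separator of G(Γ_m ∪ S) is a minimal vertex separator of G, and S itself is not a minimal vertex separator of G(Γ_m ∪ S); in particular the containment of separator sets is proper. -/
namespace Chordal

variable {V : Type*} [Fintype V]

/-- A closed walk has a chord: an edge of `G` joining two support vertices that is
not an edge of the walk. -/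
def HasChord (G : SimpleGraph V) {u : V} (c : G.Walk u u) : Prop :=
  ∃ v w, v ∈ c.support ∧ w ∈ c.support ∧ G.Adj v w ∧ s(v, w) ∉ c.edges

/-- A graph is chordal if every cycle of length at least 4 has a chord. -/
def IsChordal (G : SimpleGraph V) : Prop :=
  ∀ ⦃u : V⦄ (c : G.Walk u u), c.IsCycle → 4 ≤ c.length → HasChord G c

/-- A maximal clique of `G`. -/
def IsMaxClique (G : SimpleGraph V) (s : Set V) : Prop :=
  G.IsClique s ∧ ∀ t : Set V, G.IsClique t → s ⊆ t → s = t

/-- A maximal clique of the induced subgraph `G(W)`. -/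
def IsMaxCliqueOn (G : SimpleGraph V) (W s : Set V) : Prop :=
  s ⊆ W ∧ G.IsClique s ∧ ∀ t : Set V, t ⊆ W → G.IsClique t → s ⊆ t → s = t

/-- There is a walk from `u` to `w` staying inside `W` and avoiding `S`. -/
def ReachWithin (G : SimpleGraph V) (W S : Set V) (u w : V) : Prop :=
  ∃ p : G.Walk u w, ∀ x ∈ p.support, x ∈ W ∧ x ∉ S

/-- `S` separates `u` from `w` in the induced subgraph `G(W)`. -/
def SeparatesOn (G : SimpleGraph V) (W S : Set V) (u w : V) : Prop :=
  u ∈ W ∧ w ∈ W ∧ u ∉ S ∧ w ∉ S ∧ u ≠ w ∧ ¬ ReachWithin G W S u w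

/-- `S` is a minimal vertex separator of the induced subgraph `G(W)`:
for some pair `u, w` it is an inclusion-minimal set separating `u` from `w`. -/
def IsMinSeparatorOn (G : SimpleGraph V) (W S : Set V) : Prop :=
  S ⊆ W ∧ ∃ u w, SeparatesOn G W S u w ∧ ∀ S' ⊂ S, ¬ SeparatesOn G W S' u w

/-- `S` is a minimal vertex separator of `G`. -/
def IsMinSeparator (G : SimpleGraph V) (S : Set V) : Prop :=
  IsMinSeparatorOn G Set.univ S

/-- `S` is inclusion-minimal among the minimal vertex separators of `G`. -/
def IsInclMinSeparator (G : SimpleGraph V) (S : Set V) : Prop :=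
  IsMinSeparator G S ∧ ∀ S' : Set V, IsMinSeparator G S' → S' ⊆ S → S' = S

/-- `Γ` is a connected component of `G(V \ S)`. -/
def IsCompOutside (G : SimpleGraph V) (S Γ : Set V) : Prop :=
  ∃ u, u ∉ S ∧ Γ = {w | ReachWithin G Set.univ S u w}

/-- A vertex is simplicial if its neighborhood is a clique. -/
def IsSimplicial (G : SimpleGraph V) (v : V) : Prop :=
  G.IsClique (G.neighborSet v)

/-- The simplicial component of a clique `C`: the simplicial vertices of `G` in `C`. -/
def Simp (G : SimpleGraph V) (C : Set V) : Set V :=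
  {v ∈ C | IsSimplicial G v}

/-- The non-simplicial component of a clique `C`. -/
def Sep (G : SimpleGraph V) (C : Set V) : Set V :=
  C \ Simp G C

/-- `C` is a boundary clique (simply separated clique): a maximal clique such that
`Sep C = C ∩ C'` for some other maximal clique `C'`. -/
def IsBoundaryClique (G : SimpleGraph V) (C : Set V) : Prop :=
  IsMaxClique G C ∧ ∃ C' : Set V, IsMaxClique G C' ∧ C' ≠ C ∧ Sep G C = C ∩ C'

/-- The induced subgraph on `W`, kept on the same vertex type. -/
def restrictS (G : SimpleGraph V) (W : Set V) : SimpleGraph V where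
  Adj u v := G.Adj u v ∧ u ∈ W ∧ v ∈ W
  symm := ⟨fun u v ⟨h, hu, hv⟩ => ⟨h.symm, hv, hu⟩⟩
  loopless := ⟨fun u ⟨h, _, _⟩ => G.loopless.irrefl u h⟩

/-- The vertex subset `A` induces a connected subgraph of `T`. -/
def ConnOn {α : Type*} (T : SimpleGraph α) (A : Set α) : Prop :=
  A.Nonempty ∧ ∀ u ∈ A, ∀ v ∈ A, ∃ p : T.Walk u v, ∀ x ∈ p.support, x ∈ A

/-- The induced subgraph `G(W)` is complete. -/
def CompleteOn (G : SimpleGraph V) (W : Set V) : Prop :=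
  ∀ u ∈ W, ∀ v ∈ W, u ≠ v → G.Adj u v

/-- A clique tree of `G`: a tree on the maximal cliques of `G` satisfying the
junction property. -/
def IsCliqueTree (G : SimpleGraph V) (T : SimpleGraph {s : Set V // IsMaxClique G s}) : Prop :=
  T.IsTree ∧ ∀ (C₁ C₂ : {s : Set V // IsMaxClique G s}) (p : T.Walk C₁ C₂), p.IsPath →
    ∀ C₃ ∈ p.support, C₁.val ∩ C₂.val ⊆ C₃.val

/-- A leaf (endpoint) of a graph: a vertex with exactly one neighbor. -/
def IsLeaf {α : Type*} (T : SimpleGraph α) (a : α) : Prop :=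
  ∃! b, T.Adj a b

/-- The union of the cliques preceding position `k` in a sequence. -/
def prefUnion {K : ℕ} (f : Fin K → Set V) (k : Fin K) : Set V :=
  {v | ∃ j, j < k ∧ v ∈ f j}

/-- A perfect sequence of the maximal cliques of the induced subgraph `G(W)`:
an enumeration of the maximal cliques of `G(W)` with the running intersection property. -/
def IsPerfectSeqOn (G : SimpleGraph V) (W : Set V) {K : ℕ} (f : Fin K → Set V) : Prop :=
  Function.Injective f ∧ (∀ s : Set V, IsMaxCliqueOn G W s ↔ ∃ k, f k = s) ∧
  ∀ k : Fin K, 0 < (k : ℕ) →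
    G.IsClique (prefUnion f k ∩ f k) ∧ ∃ k' : Fin K, k' < k ∧ prefUnion f k ∩ f k ⊆ f k'

/-- A perfect sequence of the maximal cliques of `G`. -/
def IsPerfectSeq (G : SimpleGraph V) {K : ℕ} (f : Fin K → Set V) : Prop :=
  Function.Injective f ∧ (∀ s : Set V, IsMaxClique G s ↔ ∃ k, f k = s) ∧
  ∀ k : Fin K, 0 < (k : ℕ) →
    G.IsClique (prefUnion f k ∩ f k) ∧ ∃ k' : Fin K, k' < k ∧ prefUnion f k ∩ f k ⊆ f k'

/-- The closed neighborhood of a vertex. -/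
def closedNbhd (G : SimpleGraph V) (v : V) : Set V :=
  insert v (G.neighborSet v)

end Chordal

/-!
A minimal separator `S` of a chordal graph is a clique: for non-adjacent `a, b ∈ S`, shortest
`a`–`b` paths through the two full components of `G - S` would close a chordless cycle of
length at least four. Since every edge leaving `Γ ∪ S` starts in the clique `S`, a walk between
vertices of `Γ ∪ S` can be rerouted inside `Γ ∪ S` using only its own vertices, so the minimal
separators of `G(Γ ∪ S)` are minimal separators of `G`. Finally, `S` separates nothing in
`G(Γ ∪ S)`, because `Γ` is connected.
-/

namespace SimpleGraph.Walk

variable {V : Type*} {G : SimpleGraph V} {u v : V}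

lemma exists_shorter_of_adj_getVert (p : G.Walk u v) {i j : ℕ} (hij : i + 1 < j)
    (hj : j ≤ p.length) (hadj : G.Adj (p.getVert i) (p.getVert j)) :
    ∃ q : G.Walk u v, q.length < p.length ∧ q.support ⊆ p.support := by
  refine ⟨(p.take i).append (cons hadj (p.drop j)), ?_, fun x hx => ?_⟩
  · simp only [length_append, take_length, length_cons, drop_length]
    omega
  · simp only [support_append, support_cons, support_take, drop_support_eq_support_drop_min,
      List.tail_cons, List.mem_append] at hx
    exact hx.elim List.mem_of_mem_take List.mem_of_mem_drop

lemma isChordless_of_forall_length_le (p : G.Walk u v)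
    (h : ∀ q : G.Walk u v, q.support ⊆ p.support → p.length ≤ q.length) : p.IsChordless := by
  rw [isChordless_iff_forall_mem_edges]
  intro x y hx hy hxy
  obtain ⟨i, rfl, hi⟩ := mem_support_iff_exists_getVert.mp hx
  obtain ⟨j, rfl, hj⟩ := mem_support_iff_exists_getVert.mp hy
  clear hx hy
  wlog hij : i ≤ j generalizing i j
  · exact Sym2.eq_swap ▸ this j hj i hi hxy.symm (by omega)
  obtain rfl | rfl | hij := show j = i ∨ j = i + 1 ∨ i + 1 < j by omega
  · exact (hxy.ne rfl).elim
  · exact (p.mk_mem_edges_iff_exists).mpr ⟨i, by omega, rfl⟩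
  · obtain ⟨q, hlt, hq⟩ := p.exists_shorter_of_adj_getVert hij hj hxy
    exact absurd (h q hq) (by omega)

lemma exists_isPath_isChordless_support_subset (p : G.Walk u v) :
    ∃ q : G.Walk u v, q.IsPath ∧ q.IsChordless ∧ q.support ⊆ p.support := by
  classical
  obtain ⟨q, hqp, hmin⟩ := (InvImage.wf length wellFounded_lt).has_min
    {q : G.Walk u v | q.support ⊆ p.support} ⟨p, Set.Subset.rfl⟩
  have hbp : q.bypass.support ⊆ q.support := support_bypass_subset_support q
  refine ⟨q.bypass, bypass_isPath q, isChordless_of_forall_length_le _ fun r hr => ?_,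
    List.Subset.trans hbp hqp⟩
  have hr_len : ¬ r.length < q.length := hmin r (List.Subset.trans hr (List.Subset.trans hbp hqp))
  have := length_bypass_le_length q
  omega

/-- An excursion of `p` outside `W` leaves and re-enters `W` through the clique `K`, so it can
be replaced by a single edge of `K`. -/
lemma exists_walk_support_subset_of_isClique {W K : Set V} (hK : G.IsClique K)
    (hW : ∀ x ∈ W, ∀ y ∉ W, G.Adj x y → x ∈ K) (p : G.Walk u v) (hu : u ∈ W) (hv : v ∈ W) :
    ∃ q : G.Walk u v, ∀ x ∈ q.support, x ∈ W ∧ x ∈ p.support := by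
  suffices key : ∀ {u} (p : G.Walk u v), v ∈ W → ∃ d, (d = u ∨ u ∉ W ∧ d ∈ K) ∧
      ∃ q : G.Walk d v, ∀ x ∈ q.support, x ∈ W ∧ x ∈ p.support by
    obtain ⟨d, rfl | ⟨hu', -⟩, hq⟩ := key p hv
    exacts [hq, absurd hu hu']
  clear hu hv p
  intro u p hv
  induction p with
  | nil => exact ⟨_, Or.inl rfl, nil, by simpa using hv⟩
  | @cons a c _ h p ih =>
    obtain ⟨d, hd, q, hq⟩ := ih hv
    have hqs : ∀ x ∈ q.support, x ∈ W ∧ x ∈ (cons h p).support :=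
      fun x hx => ⟨(hq x hx).1, by simp [(hq x hx).2]⟩
    by_cases ha : a ∈ W
    · refine ⟨a, Or.inl rfl, ?_⟩
      have had : a = d ∨ G.Adj a d := by
        rcases hd with rfl | ⟨hc, hdK⟩
        · exact Or.inr h
        · exact (eq_or_ne a d).imp_right (hK (hW a ha c hc h) hdK)
      rcases had with rfl | had
      · exact ⟨q, hqs⟩
      · refine ⟨cons had q, fun x hx => ?_⟩
        rcases List.mem_cons.mp (support_cons had q ▸ hx) with rfl | hx
        exacts [⟨ha, start_mem_support _⟩, hqs x hx]
    · refine ⟨d, Or.inr ⟨ha, ?_⟩, q, hqs⟩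
      rcases hd with rfl | ⟨-, hdK⟩
      exacts [hW d (hq d q.start_mem_support).1 a ha h.symm, hdK]

end SimpleGraph.Walk

namespace Chordal

open SimpleGraph

variable {V : Type*} {G : SimpleGraph V} {W W' S T Γ : Set V} {u v w x y : V}

lemma IsChordal.exists_adj_of_isChordless (hch : IsChordal G) {a b : V} {P Q : G.Walk a b}
    (hP : P.IsPath) (hQ : Q.IsPath) (hPc : P.IsChordless) (hQc : Q.IsChordless)
    (hne : a ≠ b) (hab : ¬ G.Adj a b) (hPQ : ∀ x ∈ P.support, x ∈ Q.support → x = a ∨ x = b) :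
    ∃ x ∈ P.support, ∃ y ∈ Q.support, x ∉ Q.support ∧ y ∉ P.support ∧ G.Adj x y := by
  have hlen : ∀ R : G.Walk a b, 2 ≤ R.length := fun R => by
    have h0 : R.length ≠ 0 := fun h => hne (Walk.eq_of_length_eq_zero h)
    have h1 : R.length ≠ 1 := fun h => hab (Walk.adj_of_length_eq_one h)
    omega
  have hdisj : P.support.tail.Disjoint Q.reverse.support.tail := by
    intro z hzP hzQ
    have hPnd := P.cons_tail_support ▸ hP.support_nodup
    have hQnd := Q.reverse.cons_tail_support ▸ hQ.reverse.support_nodup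
    have hzQ' : z ∈ Q.support := by
      simpa using List.mem_of_mem_tail hzQ
    rcases hPQ z (List.mem_of_mem_tail hzP) hzQ' with rfl | rfl
    · exact (List.nodup_cons.mp hPnd).1 hzP
    · exact (List.nodup_cons.mp hQnd).1 hzQ
  have hcyc : (P.append Q.reverse).IsCycle := hP.isCycle_append hQ.reverse hdisj (Or.inl (hlen P))
  have hcyc_len : 4 ≤ (P.append Q.reverse).length := by
    rw [Walk.length_append, Walk.length_reverse]
    linarith [hlen P, hlen Q]
  obtain ⟨x, y, hx, hy, hxy, hxy_edge⟩ := hch _ hcyc hcyc_len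
  have hPP : x ∈ P.support → y ∈ P.support → False := fun hxP hyP =>
    hxy_edge (by simp [Walk.edges_append, hPc.mem_edges hxP hyP hxy])
  have hQQ : x ∈ Q.support → y ∈ Q.support → False := fun hxQ hyQ =>
    hxy_edge (by simp [Walk.edges_append, hQc.mem_edges hxQ hyQ hxy])
  simp only [Walk.mem_support_append_iff, Walk.support_reverse, List.mem_reverse] at hx hy
  rcases hx with hxP | hxQ <;> rcases hy with hyP | hyQ
  · exact (hPP hxP hyP).elim
  · exact ⟨x, hxP, y, hyQ, fun hxQ => hQQ hxQ hyQ, fun hyP => hPP hxP hyP, hxy⟩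
  · exact ⟨y, hyP, x, hxQ, fun hyQ => hQQ hxQ hyQ, fun hxP => hPP hxP hyP, hxy.symm⟩
  · exact (hQQ hxQ hyQ).elim

lemma ReachWithin.mem_and_notMem (h : ReachWithin G W S u v) : v ∈ W ∧ v ∉ S :=
  let ⟨p, hp⟩ := h
  hp v p.end_mem_support

lemma ReachWithin.symm (h : ReachWithin G W S u v) : ReachWithin G W S v u :=
  let ⟨p, hp⟩ := h
  ⟨p.reverse, fun x hx => hp x (by simpa using hx)⟩

lemma ReachWithin.trans (h₁ : ReachWithin G W S u v) (h₂ : ReachWithin G W S v w) :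
    ReachWithin G W S u w :=
  let ⟨p, hp⟩ := h₁
  let ⟨q, hq⟩ := h₂
  ⟨p.append q, fun x hx => (Walk.mem_support_append_iff p q).mp hx |>.elim (hp x) (hq x)⟩

lemma ReachWithin.mono (hW : W ⊆ W') (h : ReachWithin G W S u v) : ReachWithin G W' S u v :=
  let ⟨p, hp⟩ := h
  ⟨p, fun x hx => ⟨hW (hp x hx).1, (hp x hx).2⟩⟩

lemma ReachWithin.concat (h : ReachWithin G W S u v) (hvw : G.Adj v w) (hw : w ∈ W)
    (hwS : w ∉ S) : ReachWithin G W S u w :=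
  h.trans ⟨hvw.toWalk, fun x hx => by
    rcases (by simpa using hx : x = v ∨ x = w) with rfl | rfl
    exacts [h.mem_and_notMem, ⟨hw, hwS⟩]⟩

lemma reachWithin_of_mem_support (p : G.Walk u v)
    (hp : ∀ x ∈ p.support, x ∈ W ∧ x ∉ S) (hw : w ∈ p.support) : ReachWithin G W S u w := by
  classical
  exact ⟨p.takeUntil w hw, fun x hx => hp x (p.support_takeUntil_subset_support hw hx)⟩

lemma ReachWithin.exists_walk (hv : ReachWithin G W S u v) (hw : ReachWithin G W S u w) :
    ∃ p : G.Walk v w, ∀ x ∈ p.support, ReachWithin G W S u x := by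
  obtain ⟨p, hp⟩ := hv
  obtain ⟨q, hq⟩ := hw
  refine ⟨p.reverse.append q, fun x hx => ?_⟩
  rcases (Walk.mem_support_append_iff _ _).mp hx with hx | hx
  · exact reachWithin_of_mem_support p hp (by simpa using hx)
  · exact reachWithin_of_mem_support q hq hx

lemma SeparatesOn.symm (h : SeparatesOn G W S u v) : SeparatesOn G W S v u :=
  let ⟨hu, hv, huS, hvS, hne, hnr⟩ := h
  ⟨hv, hu, hvS, huS, hne.symm, fun h' => hnr h'.symm⟩

lemma SeparatesOn.exists_adj_reachWithin (hsep : SeparatesOn G W S u w)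
    (hmin : ∀ S' ⊂ S, ¬ SeparatesOn G W S' u w) {s : V} (hs : s ∈ S) :
    ∃ v, G.Adj v s ∧ ReachWithin G W S u v := by
  obtain ⟨hu, hw, huS, hwS, hne, hnr⟩ := hsep
  obtain ⟨q, hq⟩ : ReachWithin G W (S \ {s}) u w := by
    by_contra h
    exact hmin _ (Set.sdiff_singleton_ssubset.mpr hs)
      ⟨hu, hw, fun h => huS h.1, fun h => hwS h.1, hne, h⟩
  -- the first vertex of `q` not reachable from `u` avoiding `S` must be `s`
  obtain ⟨d, hd, hd₁, hd₂⟩ := q.exists_boundary_dart {x | ReachWithin G W S u x}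
    ⟨Walk.nil, fun x hx => by simp_all⟩ hnr
  have hdq := hq d.snd (q.dart_snd_mem_support_of_mem_darts hd)
  have hdS : d.snd ∈ S := by_contra fun h => hd₂ (ReachWithin.concat hd₁ d.adj hdq.1 h)
  obtain rfl : d.snd = s := by simpa [hdS] using hdq.2
  exact ⟨d.fst, d.adj, hd₁⟩

lemma SeparatesOn.exists_isChordless_path (hsep : SeparatesOn G W S u w)
    (hmin : ∀ S' ⊂ S, ¬ SeparatesOn G W S' u w) {a b : V} (ha : a ∈ S) (hb : b ∈ S) :
    ∃ P : G.Walk a b, P.IsPath ∧ P.IsChordless ∧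
      ∀ x ∈ P.support, x = a ∨ x = b ∨ ReachWithin G W S u x := by
  obtain ⟨va, hva, hrva⟩ := hsep.exists_adj_reachWithin hmin ha
  obtain ⟨vb, hvb, hrvb⟩ := hsep.exists_adj_reachWithin hmin hb
  obtain ⟨r, hr⟩ := hrva.exists_walk hrvb
  obtain ⟨P, hP, hPc, hPsub⟩ :=
    (Walk.cons hva.symm (r.concat hvb)).exists_isPath_isChordless_support_subset
  refine ⟨P, hP, hPc, fun x hx => ?_⟩
  have := hPsub hx
  simp only [Walk.support_cons, Walk.support_concat, List.mem_cons, List.mem_append,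
    List.not_mem_nil, or_false] at this
  rcases this with rfl | hx | rfl
  exacts [Or.inl rfl, Or.inr (Or.inr (hr x hx)), Or.inr (Or.inl rfl)]

lemma IsMinSeparatorOn.isClique (hch : IsChordal G) (hS : IsMinSeparatorOn G W S) :
    G.IsClique S := by
  obtain ⟨-, u, w, hsep, hmin⟩ := hS
  have hnr : ¬ ReachWithin G W S u w := hsep.2.2.2.2.2
  intro a ha b hb hne
  by_contra hab
  obtain ⟨P, hP, hPc, hPu⟩ := hsep.exists_isChordless_path hmin ha hb
  obtain ⟨Q, hQ, hQc, hQw⟩ :=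
    hsep.symm.exists_isChordless_path (fun S' h h' => hmin S' h h'.symm) ha hb
  have hdisj : ∀ x, ReachWithin G W S u x → ReachWithin G W S w x → False :=
    fun x hux hwx => hnr (hux.trans hwx.symm)
  have hPQ : ∀ x ∈ P.support, x ∈ Q.support → x = a ∨ x = b := fun x hxP hxQ => by
    rcases hPu x hxP with h | h | hux
    · exact Or.inl h
    · exact Or.inr h
    rcases hQw x hxQ with h | h | hwx
    · exact Or.inl h
    · exact Or.inr h
    exact (hdisj x hux hwx).elim
  obtain ⟨x, hxP, y, hyQ, hxQ, hyP, hxy⟩ := hch.exists_adj_of_isChordless hP hQ hPc hQc hne hab hPQ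
  have hux : ReachWithin G W S u x := by
    rcases hPu x hxP with rfl | rfl | h
    exacts [absurd Q.start_mem_support hxQ, absurd Q.end_mem_support hxQ, h]
  have hwy : ReachWithin G W S w y := by
    rcases hQw y hyQ with rfl | rfl | h
    exacts [absurd P.start_mem_support hyP, absurd P.end_mem_support hyP, h]
  exact hdisj y (hux.concat hxy hwy.mem_and_notMem.1 hwy.mem_and_notMem.2) hwy

lemma IsMinSeparatorOn.isMinSeparator
    (hW : ∀ a ∈ W, ∀ b ∈ W, ReachWithin G Set.univ T a b → ReachWithin G W T a b)
    (hT : IsMinSeparatorOn G W T) : IsMinSeparator G T := by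
  obtain ⟨-, u, w, ⟨hu, hw, huT, hwT, hne, hnr⟩, hmin⟩ := hT
  refine ⟨Set.subset_univ T, u, w,
    ⟨trivial, trivial, huT, hwT, hne, fun h => hnr (hW u hu w hw h)⟩,
    fun T' hT' ⟨_, _, huT', hwT', _, hnr'⟩ => ?_⟩
  exact hmin T' hT' ⟨hu, hw, huT', hwT', hne, fun h => hnr' (h.mono (Set.subset_univ W))⟩

lemma IsCompOutside.mem_of_adj (hΓ : IsCompOutside G S Γ) (hx : x ∈ Γ) (hxy : G.Adj x y)
    (hy : y ∉ S) : y ∈ Γ := by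
  obtain ⟨u, -, rfl⟩ := hΓ
  exact ReachWithin.concat hx hxy trivial hy

lemma IsCompOutside.reachWithin (hΓ : IsCompOutside G S Γ) (hx : x ∈ Γ) (hy : y ∈ Γ) :
    ReachWithin G Γ S x y := by
  obtain ⟨u, -, rfl⟩ := hΓ
  obtain ⟨p, hp⟩ := ReachWithin.exists_walk hx hy
  exact ⟨p, fun z hz => ⟨hp z hz, (hp z hz).mem_and_notMem.2⟩⟩

lemma IsCompOutside.reachWithin_union (hΓ : IsCompOutside G S Γ) (hS : G.IsClique S)
    (ha : x ∈ Γ ∪ S) (hb : y ∈ Γ ∪ S) (h : ReachWithin G Set.univ T x y) :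
    ReachWithin G (Γ ∪ S) T x y := by
  obtain ⟨p, hp⟩ := h
  have hbdry : ∀ x ∈ Γ ∪ S, ∀ y ∉ Γ ∪ S, G.Adj x y → x ∈ S := fun x hx y hy hxy =>
    hx.resolve_left fun hxΓ => hy (Or.inl (hΓ.mem_of_adj hxΓ hxy fun hyS => hy (Or.inr hyS)))
  obtain ⟨q, hq⟩ := p.exists_walk_support_subset_of_isClique hS hbdry ha hb
  exact ⟨q, fun z hz => ⟨(hq z hz).1, (hp z (hq z hz).2).2⟩⟩

lemma IsCompOutside.not_isMinSeparatorOn (hΓ : IsCompOutside G S Γ) :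
    ¬ IsMinSeparatorOn G (Γ ∪ S) S := by
  rintro ⟨-, u, w, ⟨hu, hw, huS, hwS, -, hnr⟩, -⟩
  exact hnr ((hΓ.reachWithin (hu.resolve_right huS) (hw.resolve_right hwS)).mono
    Set.subset_union_left)

theorem minSeparators_of_component_subset_general {V : Type*}
    (G : SimpleGraph V) (hch : IsChordal G)
    (S : Set V) (hS : IsInclMinSeparator G S)
    (Γ : Set V) (hΓ : IsCompOutside G S Γ) :
    (∀ S' : Set V, IsMinSeparatorOn G (Γ ∪ S) S' → IsMinSeparator G S') ∧
    ¬ IsMinSeparatorOn G (Γ ∪ S) S ∧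
    {S' : Set V | IsMinSeparatorOn G (Γ ∪ S) S'} ⊂ {S' : Set V | IsMinSeparator G S'} := by
  have hclique : G.IsClique S := hS.1.isClique hch
  have hsub : ∀ S' : Set V, IsMinSeparatorOn G (Γ ∪ S) S' → IsMinSeparator G S' :=
    fun S' => IsMinSeparatorOn.isMinSeparator fun _ ha _ hb => hΓ.reachWithin_union hclique ha hb
  have hS_not : ¬ IsMinSeparatorOn G (Γ ∪ S) S := hΓ.not_isMinSeparatorOn
  exact ⟨hsub, hS_not, hsub, fun h => hS_not (h hS.1)⟩

theorem minSeparators_of_component_subset {V : Type*} [Fintype V]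
    (G : SimpleGraph V) (hconn : G.Connected) (hch : IsChordal G)
    (S : Set V) (hS : IsInclMinSeparator G S)
    (Γ : Set V) (hΓ : IsCompOutside G S Γ)
    (hnc : ¬ CompleteOn G (Γ ∪ S)) :
    (∀ S' : Set V, IsMinSeparatorOn G (Γ ∪ S) S' → IsMinSeparator G S') ∧
    ¬ IsMinSeparatorOn G (Γ ∪ S) S ∧
    {S' : Set V | IsMinSeparatorOn G (Γ ∪ S) S'} ⊂ {S' : Set V | IsMinSeparator G S'} :=
  minSeparators_of_component_subset_general G hch S hS Γ hΓ

end Chordal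
end

section
/- Let G be a connected chordal graph, π a perfect sequence of its maximal cliques, and k < K. If π' is any perfect sequence of the maximal cliques of the induced subgraph on C_{π(1)} ∪ ... ∪ C_{π(k)} (whose maximal cliques are exactly {C_{π(1)},...,C_{π(k)}}), then the concatenated sequence C_{π'(1)},...,C_{π'(k)}, C_{π(k+1)},...,C_{π(K)} is a perfect sequence of the maximal cliques of G. -/
namespace Chordal

variable {V : Type*} [Fintype V]

/-!
Let `W = C_{π(1)} ∪ ⋯ ∪ C_{π(k)}`. Following the running intersection property backwards, every
`W ∩ C_{π(m)}` lies in one of `C_{π(1)}, …, C_{π(k)}`, so these are exactly the maximal cliques of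
`G(W)`. Hence the new sequence lists the same cliques as `π`, and from position `k + 1` on each
clique is preceded by the same set of cliques as in `π`, so the running intersection property
there is inherited from `π`; up to position `k` it is that of `π'`.
-/

def replacePrefix {α : Type*} {k K : ℕ} (f : Fin k → α) (F : Fin K → α) : Fin K → α :=
  fun i => if h : (i : ℕ) < k then f ⟨i, h⟩ else F i

section ReplacePrefix

variable {α : Type*} {k K : ℕ} {f : Fin k → α} {F : Fin K → α}

theorem replacePrefix_of_lt {i : Fin K} (h : (i : ℕ) < k) : replacePrefix f F i = f ⟨i, h⟩ :=
  dif_pos h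

theorem replacePrefix_of_le {i : Fin K} (h : k ≤ (i : ℕ)) : replacePrefix f F i = F i :=
  dif_neg h.not_gt

theorem replacePrefix_castLE (hk : k ≤ K) (i : Fin k) :
    replacePrefix f F (Fin.castLE hk i) = f i :=
  replacePrefix_of_lt (i := Fin.castLE hk i) i.isLt

theorem exists_replacePrefix_eq_iff (hk : k ≤ K) (hfF : Set.range f = F '' {j | (j : ℕ) < k})
    {n : ℕ} (hn : k ≤ n) (a : α) :
    (∃ i : Fin K, (i : ℕ) < n ∧ replacePrefix f F i = a) ↔
      ∃ j : Fin K, (j : ℕ) < n ∧ F j = a := by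
  constructor
  · rintro ⟨i, hin, rfl⟩
    by_cases hik : (i : ℕ) < k
    · obtain ⟨j, hjk, hj⟩ := hfF.subset ⟨⟨i, hik⟩, rfl⟩
      exact ⟨j, hjk.trans_le hn, by rw [hj, replacePrefix_of_lt hik]⟩
    · exact ⟨i, hin, (replacePrefix_of_le (not_lt.1 hik)).symm⟩
  · rintro ⟨j, hjn, rfl⟩
    by_cases hjk : (j : ℕ) < k
    · obtain ⟨i, hi⟩ := hfF.symm.subset ⟨j, hjk, rfl⟩
      exact ⟨Fin.castLE hk i, i.isLt.trans_le hn, by rw [replacePrefix_castLE, hi]⟩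
    · exact ⟨j, hjn, replacePrefix_of_le (not_lt.1 hjk)⟩

theorem replacePrefix_injective (hfF : Set.range f = F '' {j | (j : ℕ) < k})
    (hf : Function.Injective f) (hF : Function.Injective F) :
    Function.Injective (replacePrefix f F) := by
  have mixed : ∀ {i₁ i₂ : Fin K} (h₁ : (i₁ : ℕ) < k), k ≤ (i₂ : ℕ) → f ⟨i₁, h₁⟩ ≠ F i₂ := by
    rintro i₁ i₂ h₁ h₂ he
    obtain ⟨j, hjk, hj⟩ := hfF.subset ⟨_, he⟩
    exact absurd (hF hj ▸ hjk) h₂.not_gt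
  intro i₁ i₂ he
  by_cases h₁ : (i₁ : ℕ) < k <;> by_cases h₂ : (i₂ : ℕ) < k
  · rw [replacePrefix_of_lt h₁, replacePrefix_of_lt h₂] at he
    exact Fin.ext (Fin.mk.inj_iff.1 (hf he))
  · rw [replacePrefix_of_lt h₁, replacePrefix_of_le (not_lt.1 h₂)] at he
    exact absurd he (mixed h₁ (not_lt.1 h₂))
  · rw [replacePrefix_of_le (not_lt.1 h₁), replacePrefix_of_lt h₂] at he
    exact absurd he.symm (mixed h₂ (not_lt.1 h₁))
  · rw [replacePrefix_of_le (not_lt.1 h₁), replacePrefix_of_le (not_lt.1 h₂)] at he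
    exact hF he

end ReplacePrefix

section PerfectSeq

variable {V : Type*} {G : SimpleGraph V} {k K : ℕ} {f : Fin k → Set V} {F : Fin K → Set V}

theorem prefUnion_replacePrefix_of_lt {i : Fin K} (h : (i : ℕ) < k) :
    prefUnion (replacePrefix f F) i = prefUnion f ⟨i, h⟩ := by
  ext v
  constructor
  · rintro ⟨j, hji, hv⟩
    have hjk : (j : ℕ) < k := lt_trans hji h
    exact ⟨⟨j, hjk⟩, hji, by rwa [replacePrefix_of_lt hjk] at hv⟩
  · rintro ⟨j, hji, hv⟩
    have hjK : (j : ℕ) < K := lt_trans hji i.isLt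
    exact ⟨⟨j, hjK⟩, hji, by rwa [replacePrefix_of_lt (i := ⟨j, hjK⟩) j.isLt]⟩

theorem prefUnion_replacePrefix_of_le (hk : k ≤ K) (hfF : Set.range f = F '' {j | (j : ℕ) < k})
    {i : Fin K} (h : k ≤ (i : ℕ)) : prefUnion (replacePrefix f F) i = prefUnion F i := by
  ext v
  constructor
  · rintro ⟨j, hji, hv⟩
    obtain ⟨j', hj'i, hj'⟩ := (exists_replacePrefix_eq_iff hk hfF h _).1 ⟨j, hji, rfl⟩
    exact ⟨j', hj'i, hj' ▸ hv⟩
  · rintro ⟨j, hji, hv⟩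
    obtain ⟨j', hj'i, hj'⟩ := (exists_replacePrefix_eq_iff hk hfF h _).2 ⟨j, hji, rfl⟩
    exact ⟨j', hj'i, hj' ▸ hv⟩

theorem isPerfectSeq_replacePrefix {W : Set V} (hk : k ≤ K) (hF : IsPerfectSeq G F)
    (hf : IsPerfectSeqOn G W f) (hfF : Set.range f = F '' {j | (j : ℕ) < k}) :
    IsPerfectSeq G (replacePrefix f F) := by
  refine ⟨replacePrefix_injective hfF hf.1 hF.1, fun s => ?_, fun i hi => ?_⟩
  · rw [hF.2.1 s]
    simpa using (exists_replacePrefix_eq_iff hk hfF hk s).symm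
  by_cases h : (i : ℕ) < k
  · obtain ⟨hcl, i', hi', hsub⟩ := hf.2.2 ⟨i, h⟩ hi
    rw [prefUnion_replacePrefix_of_lt h, replacePrefix_of_lt h]
    exact ⟨hcl, Fin.castLE hk i', hi', by rwa [replacePrefix_castLE]⟩
  · have hki : k ≤ (i : ℕ) := not_lt.1 h
    obtain ⟨hcl, m, hmi, hsub⟩ := hF.2.2 i hi
    obtain ⟨m', hm'i, hm'⟩ := (exists_replacePrefix_eq_iff hk hfF hki (F m)).2 ⟨m, hmi, rfl⟩
    rw [prefUnion_replacePrefix_of_le hk hfF hki, replacePrefix_of_le hki]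
    exact ⟨hcl, m', hm'i, hm' ▸ hsub⟩

theorem exists_isMaxClique_superset [Finite V] {s : Set V}
    (hs : G.IsClique s) : ∃ t, IsMaxClique G t ∧ s ⊆ t := by
  obtain ⟨t, ⟨ht, hst⟩, hmax⟩ := Set.Finite.exists_maximalFor id
    {t : Set V | G.IsClique t ∧ s ⊆ t} (Set.toFinite _) ⟨s, hs, subset_rfl⟩
  exact ⟨t, ⟨ht, fun u hu htu => htu.antisymm (hmax ⟨hu, hst.trans htu⟩ htu)⟩, hst⟩

theorem IsMaxClique.isMaxCliqueOn {W s : Set V} (hs : IsMaxClique G s)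
    (hsW : s ⊆ W) : IsMaxCliqueOn G W s :=
  ⟨hsW, hs.1, fun t _ ht hst => hs.2 t ht hst⟩

theorem exists_lt_inter_subset_of_runningIntersection
    (hF : ∀ i : Fin K, 0 < (i : ℕ) → ∃ i' < i, prefUnion F i ∩ F i ⊆ F i')
    (hk : 0 < k) (m : Fin K) :
    ∃ j : Fin K, (j : ℕ) < k ∧ {v | ∃ j : Fin K, (j : ℕ) < k ∧ v ∈ F j} ∩ F m ⊆ F j := by
  induction m using WellFoundedLT.induction with
  | _ m ih =>
    by_cases hmk : (m : ℕ) < k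
    · exact ⟨m, hmk, Set.inter_subset_right⟩
    · obtain ⟨m', hm'm, hsub⟩ := hF m (by omega)
      obtain ⟨j, hjk, hj⟩ := ih m' hm'm
      refine ⟨j, hjk, fun v ⟨hvW, hvm⟩ => hj ⟨hvW, hsub ⟨?_, hvm⟩⟩⟩
      obtain ⟨i, hik, hvi⟩ := hvW
      exact ⟨i, show (i : ℕ) < m by omega, hvi⟩

theorem isMaxCliqueOn_prefix_iff [Finite V] (hF : IsPerfectSeq G F) (hk : 0 < k) (s : Set V) :
    IsMaxCliqueOn G {v | ∃ j : Fin K, (j : ℕ) < k ∧ v ∈ F j} s ↔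
      ∃ j : Fin K, (j : ℕ) < k ∧ F j = s := by
  have hFW : ∀ j : Fin K, (j : ℕ) < k →
      IsMaxCliqueOn G {v | ∃ j : Fin K, (j : ℕ) < k ∧ v ∈ F j} (F j) := fun j hj =>
    ((hF.2.1 _).2 ⟨j, rfl⟩).isMaxCliqueOn fun v hv => ⟨j, hj, hv⟩
  constructor
  · rintro ⟨hsW, hs, hmax⟩
    obtain ⟨t, ht, hst⟩ := exists_isMaxClique_superset hs
    obtain ⟨m, rfl⟩ := (hF.2.1 t).1 ht
    obtain ⟨j, hjk, hj⟩ :=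
      exists_lt_inter_subset_of_runningIntersection (fun i hi => (hF.2.2 i hi).2) hk m
    exact ⟨j, hjk, (hmax _ (hFW j hjk).1 (hFW j hjk).2.1 fun v hv => hj ⟨hsW hv, hst hv⟩).symm⟩
  · rintro ⟨j, hjk, rfl⟩
    exact hFW j hjk

end PerfectSeq

theorem perfectSeq_replace_prefix_general {V : Type*} [Fintype V]
    (G : SimpleGraph V)
    (K k : ℕ) (hk : k < K) (F : Fin K → Set V) (hF : IsPerfectSeq G F)
    (f : Fin k → Set V)
    (hf : IsPerfectSeqOn G {v | ∃ j : Fin K, (j : ℕ) < k ∧ v ∈ F j} f) :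
    IsPerfectSeq G (fun i : Fin K => if h : (i : ℕ) < k then f ⟨i, h⟩ else F i) := by
  have hfF : Set.range f = F '' {j | (j : ℕ) < k} := by
    rcases Nat.eq_zero_or_pos k with rfl | hk0
    · simp
    · exact Set.ext fun s => (hf.2.1 s).symm.trans (isMaxCliqueOn_prefix_iff hF hk0 s)
  exact isPerfectSeq_replacePrefix hk.le hF hf hfF

theorem perfectSeq_replace_prefix {V : Type*} [Fintype V]
    (G : SimpleGraph V) (hconn : G.Connected) (hch : IsChordal G)
    (K k : ℕ) (hk : k < K) (F : Fin K → Set V) (hF : IsPerfectSeq G F)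
    (f : Fin k → Set V)
    (hf : IsPerfectSeqOn G {v | ∃ j : Fin K, (j : ℕ) < k ∧ v ∈ F j} f) :
    IsPerfectSeq G (fun i : Fin K => if h : (i : ℕ) < k then f ⟨i, h⟩ else F i) :=
  perfectSeq_replace_prefix_general G K k hk F hF f hf

end Chordal
end
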